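/- Let n : ℕ and A : Matrix (Fin n) (Fin n) ℕ. Define the vertex type V' := Fin n ⊕ (Σ q : Fin n × Fin n, Fin (A q.1 q.2)) and the 0/1 matrix A' : Matrix V' V' ℕ by: A' (Sum.inl i) (Sum.inr ⟨(i₀,j₀), c⟩) = 1 if i = i₀, else 0; A' (Sum.inr ⟨(i₀,j₀), c⟩) (Sum.inl j) = 1 if j = j₀, else 0; and A' u w = 0 for all other pairs (u,w). Then for every k : ℕ and all i j : Fin n, (A' ^ (2·k)) (Sum.inl i) (Sum.inl j) = (A ^ k) i j; that is, bisecting every edge of the multigraph with a new vertex preserves the number of walks between original vertices while exactly doubling their lengths. -/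
import Mathlib


/-- Vertex type of the graph obtained from a multigraph with adjacency matrix `A`
by bisecting each edge with a new vertex. -/
abbrev bisectV (n : ℕ) (A : Matrix (Fin n) (Fin n) ℕ) : Type :=
  Fin n ⊕ (Σ q : Fin n × Fin n, Fin (A q.1 q.2))

/-- The 0/1 adjacency matrix of the bisected graph. -/
def bisectA (n : ℕ) (A : Matrix (Fin n) (Fin n) ℕ) :
    Matrix (bisectV n A) (bisectV n A) ℕ :=
  Matrix.of fun u w =>
    match u, w with
    | Sum.inl i, Sum.inr ⟨(i₀, _), _⟩ => if i = i₀ then 1 else 0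
    | Sum.inr ⟨(_, j₀), _⟩, Sum.inl j => if j = j₀ then 1 else 0
    | _, _ => 0

lemma bisect_sq_ll (n : ℕ) (A : Matrix (Fin n) (Fin n) ℕ) (i j : Fin n) :
    (bisectA n A * bisectA n A) (Sum.inl i) (Sum.inl j) = A i j := by
  simp only [Matrix.mul_apply, Fintype.sum_sum_type, bisectA, Matrix.of_apply]
  rw [← Finset.univ_sigma_univ, Finset.sum_sigma]
  simp [Fintype.sum_prod_type, ite_and, mul_ite, Finset.sum_ite_eq, Finset.sum_ite_eq',
    apply_ite Finset.card, Finset.card_univ]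

lemma bisect_sq_lr (n : ℕ) (A : Matrix (Fin n) (Fin n) ℕ)
    (i : Fin n) (x : Σ q : Fin n × Fin n, Fin (A q.1 q.2)) :
    (bisectA n A * bisectA n A) (Sum.inl i) (Sum.inr x) = 0 := by
  simp [Matrix.mul_apply, Fintype.sum_sum_type, bisectA]

lemma bisect_pow_lr (n : ℕ) (A : Matrix (Fin n) (Fin n) ℕ) (k : ℕ)
    (i : Fin n) (x : Σ q : Fin n × Fin n, Fin (A q.1 q.2)) :
    (bisectA n A ^ (2 * k)) (Sum.inl i) (Sum.inr x) = 0 := by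
  induction k generalizing x with
  | zero => simp [Matrix.one_apply]
  | succ k ih =>
    have h : 2 * (k + 1) = 2 * k + 2 := by ring
    rw [h, pow_add, pow_two, ← mul_assoc, Matrix.mul_apply]
    rw [Fintype.sum_sum_type]
    have h1 : ∀ i' : Fin n,
        (bisectA n A ^ (2 * k) * bisectA n A) (Sum.inl i) (Sum.inl i') *
          bisectA n A (Sum.inl i') (Sum.inr x) = 0 := by
      intro i'
      rw [Matrix.mul_apply, Fintype.sum_sum_type]
      have : ∀ y : Σ q : Fin n × Fin n, Fin (A q.1 q.2),
          (bisectA n A ^ (2 * k)) (Sum.inl i) (Sum.inr y) *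
            bisectA n A (Sum.inr y) (Sum.inl i') = 0 := fun y => by rw [ih y]; ring
      have hz : ∀ i'' : Fin n, bisectA n A (Sum.inl i'') (Sum.inl i') = 0 := fun _ => rfl
      simp [this, hz]
    have h2 : ∀ y : Σ q : Fin n × Fin n, Fin (A q.1 q.2),
        (bisectA n A ^ (2 * k) * bisectA n A) (Sum.inl i) (Sum.inr y) *
          bisectA n A (Sum.inr y) (Sum.inr x) = 0 := by
      intro y
      simp [bisectA]
    simp [h1, h2]

/-- Bisecting every edge of a multigraph preserves the number of walks between
original vertices while exactly doubling their lengths. -/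
theorem bisect_pow_even (n : ℕ) (A : Matrix (Fin n) (Fin n) ℕ) (k : ℕ) (i j : Fin n) :
    (bisectA n A ^ (2 * k)) (Sum.inl i) (Sum.inl j) = (A ^ k) i j := by
  induction k generalizing i j with
  | zero => simp [Matrix.one_apply, Sum.inl.injEq]
  | succ k ih =>
    have h : 2 * (k + 1) = 2 * k + 2 := by ring
    rw [h, pow_add, pow_two, ← mul_assoc, mul_assoc, Matrix.mul_apply, Fintype.sum_sum_type]
    have h2 : ∀ y : Σ q : Fin n × Fin n, Fin (A q.1 q.2),
        (bisectA n A ^ (2 * k)) (Sum.inl i) (Sum.inr y) *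
          (bisectA n A * bisectA n A) (Sum.inr y) (Sum.inl j) = 0 := fun y => by
      rw [bisect_pow_lr]; ring
    simp only [h2, Finset.sum_const_zero, add_zero]
    rw [pow_succ, Matrix.mul_apply]
    exact Finset.sum_congr rfl fun i' _ => by rw [ih, bisect_sq_ll]
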